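/- Let (T,ℓ) be a degree tree, v a node of T, and w the certificate of v. Then either w = v, or v is an internal node and w is a descendant of v lying in the subtree T_* induced by the leftmost child of v; in the latter case, w is not the last node of T_* in preorder. -/

import Mathlib

/-! ### Dyck paths: `true` = up step, `false` = down step -/

/-- A Dyck word: every prefix has at least as many up steps as down steps,
and the whole word has equally many. -/
def IsDyck (w : List Bool) : Prop :=
  (∀ k ≤ w.length, (w.take k).count false ≤ (w.take k).count true) ∧
    w.count false = w.count true

instance : DecidablePred IsDyck := fun w => by
  unfold IsDyck; infer_instance

/-- `w` is a Dyck path of size `n` (length `2n`). -/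
def IsDyckOfSize (n : ℕ) (w : List Bool) : Prop := IsDyck w ∧ w.length = 2 * n

/-- The 0-based position of the `i`-th (1-based) up step of `w`. -/
def upPos (w : List Bool) (i : ℕ) : ℕ :=
  ((List.range w.length).filter (fun p => w.getD p false)).getD (i - 1) w.length

/-- The 0-based position of the down step matching the `i`-th (1-based) up step:
the unique down step such that the factor strictly between them is a Dyck word. -/
def matchPos (w : List Bool) (i : ℕ) : ℕ :=
  ((List.range w.length).filter (fun q =>
      decide (upPos w i < q) && !(w.getD q true) &&
        decide (IsDyck ((w.drop (upPos w i + 1)).take (q - (upPos w i + 1)))))).headD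
    w.length

/-- Bracket vector: `bracket w i` is the size (half-length) of the factor of `w`
strictly between the `i`-th up step and its matching down step. -/
def bracket (w : List Bool) (i : ℕ) : ℕ := (matchPos w i - (upPos w i + 1)) / 2

/-- The factor of `w` strictly between the `i`-th up step and its matching down step. -/
def Pslice (w : List Bool) (i : ℕ) : List Bool :=
  (w.drop (upPos w i + 1)).take (matchPos w i - (upPos w i + 1))

/-- `Type(w)_i`: `1` if the `i`-th up step is immediately followed by an up step, else `0`. -/
def typ (w : List Bool) (i : ℕ) : ℕ := if w.getD (upPos w i + 1) false then 1 else 0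

/-- Number of rising contacts: up steps starting on the x-axis. -/
def risingContacts (w : List Bool) : ℕ :=
  ((List.range w.length).filter (fun p =>
      w.getD p false && ((w.take p).count true == (w.take p).count false))).length

/-- Tamari order via bracket vectors. -/
def TamariLE (n : ℕ) (P Q : List Bool) : Prop :=
  ∀ i, 1 ≤ i → i ≤ n → bracket P i ≤ bracket Q i

/-- A Tamari interval of size `n`. -/
def IsTamariInterval (n : ℕ) (P Q : List Bool) : Prop :=
  IsDyckOfSize n P ∧ IsDyckOfSize n Q ∧ TamariLE n P Q

/-- A new interval of size `n` (Chapoton): `V_Q(1)` is maximal (the source states this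
condition as `V_Q(1) = n`, with its convention relating trees of size `n` to intervals of
size `n + 1`; for the strict-factor bracket vector of a path of size `n` this maximal
value is `n - 1`), and `V_Q(i) > 0` implies `V_P(i) ≤ V_Q(i+1)`. -/
def IsNewInterval (n : ℕ) (P Q : List Bool) : Prop :=
  IsTamariInterval n P Q ∧ bracket Q 1 + 1 = n ∧
    ∀ i, 1 ≤ i → i ≤ n → 0 < bracket Q i → bracket P i ≤ bracket Q (i + 1)

/-- Number of indices `1 ≤ i ≤ n` with `(Type(P)_i, Type(Q)_i) = (0,0)`. -/
def c00 (n : ℕ) (P Q : List Bool) : ℕ :=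
  ((Finset.Icc 1 n).filter (fun i => typ P i = 0 ∧ typ Q i = 0)).card

/-- Number of indices `1 ≤ i ≤ n` with `(Type(P)_i, Type(Q)_i) = (0,1)`. -/
def c01 (n : ℕ) (P Q : List Bool) : ℕ :=
  ((Finset.Icc 1 n).filter (fun i => typ P i = 0 ∧ typ Q i = 1)).card

/-- Number of indices `1 ≤ i ≤ n` with `(Type(P)_i, Type(Q)_i) = (1,1)`. -/
def c11 (n : ℕ) (P Q : List Bool) : ℕ :=
  ((Finset.Icc 1 n).filter (fun i => typ P i = 1 ∧ typ Q i = 1)).card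

/-! ### Plane trees with integer node labels -/

/-- A plane tree whose nodes carry labels in `ℤ`. -/
inductive LTree : Type where
  | node : ℤ → List LTree → LTree

instance : Inhabited LTree := ⟨.node 0 []⟩

/-- The label of the root. -/
def LTree.label : LTree → ℤ
  | .node l _ => l

/-- The list of children (subtrees) of the root, from left to right. -/
def LTree.children : LTree → List LTree
  | .node _ ts => ts

/-- Whether the root is a leaf. -/
def LTree.isLeaf (t : LTree) : Bool := t.children.isEmpty

mutual
/-- The size of a tree = number of edges. -/
def LTree.size : LTree → ℕ
  | .node _ ts => LTree.sizeList ts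
def LTree.sizeList : List LTree → ℕ
  | [] => 0
  | t :: ts => 1 + t.size + LTree.sizeList ts
end

/-- The label `a` of the leftmost descending edge of the root (0 for a leaf),
recovered from the node labels: `ℓ(v) = k - a + ℓ(v₁) + ⋯ + ℓ(v_k)`. -/
def LTree.aVal : LTree → ℤ
  | .node _ [] => 0
  | .node l ts => (ts.length : ℤ) + (ts.map LTree.label).sum - l

/-- `(T, ℓ)` is a degree tree: leaves are labeled `0` and every internal node `v`
with children `v₁, …, v_k` satisfies `ℓ(v) = k - a + ℓ(v₁) + ⋯ + ℓ(v_k)` for some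
`0 ≤ a ≤ ℓ(v₁)`. -/
inductive IsDegreeTree : LTree → Prop where
  | leaf : IsDegreeTree (.node 0 [])
  | internal (l a : ℤ) (t₁ : LTree) (ts : List LTree)
      (h₁ : IsDegreeTree t₁) (h : ∀ t ∈ ts, IsDegreeTree t)
      (ha₀ : 0 ≤ a) (ha₁ : a ≤ t₁.label)
      (hl : l = ((1 + ts.length : ℕ) : ℤ) - a + (t₁.label + (ts.map LTree.label).sum)) :
      IsDegreeTree (.node l (t₁ :: ts))

mutual
/-- The list of all subtrees of `T` (one for each node), in preorder. -/
def LTree.preSub : LTree → List LTree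
  | .node l ts => .node l ts :: LTree.preSubList ts
def LTree.preSubList : List LTree → List LTree
  | [] => []
  | t :: ts => t.preSub ++ LTree.preSubList ts
end

/-- The subtree induced by the `i`-th node (0-based) of `T` in preorder. -/
def LTree.nth (T : LTree) (i : ℕ) : LTree := T.preSub.getD i default

mutual
/-- Sum of the edge labels `ℓ_Λ(e)` over all edges of the tree (the leftmost
descending edge of each internal node carries `a`, all other edges carry `0`). -/
def LTree.eSum : LTree → ℤ
  | .node l ts => LTree.aVal (.node l ts) + LTree.eSumList ts
def LTree.eSumList : List LTree → ℤ
  | [] => 0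
  | t :: ts => t.eSum + LTree.eSumList ts
end

mutual
/-- The Dyck word of a plane tree under the classical bijection
(recording the depth evolution along the preorder traversal). -/
def LTree.toDyck : LTree → List Bool
  | .node _ ts => LTree.toDyckList ts
def LTree.toDyckList : List LTree → List Bool
  | [] => []
  | t :: ts => true :: (t.toDyck ++ (false :: LTree.toDyckList ts))
end

/-- The upper path `Q = u Q' d` of `I_T`, where `Q'` corresponds to `T`. -/
def Qpath (T : LTree) : List Bool := true :: (T.toDyck ++ [false])

/-! ### The certificate process -/

/-- The least index `> i` not colored red. -/
def nextBlack (red : Finset ℕ) (i : ℕ) : ℕ :=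
  Nat.find (p := fun j => i < j ∧ j ∉ red) (by
    refine ⟨red.sup id + i + 1, by omega, fun h => ?_⟩
    have := Finset.le_sup (f := id) h
    simp only [id_eq] at this
    omega)

/-- The `k`-th black (non-red) index after `i`. -/
def kthBlack (red : Finset ℕ) (i : ℕ) : ℕ → ℕ
  | 0 => i
  | k + 1 => nextBlack red (kthBlack red i k)

/-- The set of red nodes after processing the `k` nodes `n, n-1, …, n-k+1`
in reverse preorder; at the step for a non-leaf node `i` the first `r i` black
nodes after `i` are colored red. -/
def redGo (r : ℕ → ℕ) (lf : ℕ → Bool) (n : ℕ) : ℕ → Finset ℕ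
  | 0 => ∅
  | k + 1 =>
      let s := redGo r lf n k
      let i := n - k
      if lf i then s else s ∪ (Finset.Icc 1 (r i)).image (kthBlack s i)

/-- The certificate of node `i`: itself if `i` is a leaf, otherwise the node just
before the `(r i + 1)`-st black node after `i` at the step for `i`. -/
def certAux (r : ℕ → ℕ) (lf : ℕ → Bool) (n i : ℕ) : ℕ :=
  if lf i then i else kthBlack (redGo r lf n (n - i)) i (r i + 1) - 1

/-- The certificate (as a preorder index) of the `i`-th preorder node of `T`. -/
def cert (T : LTree) (i : ℕ) : ℕ :=
  certAux (fun j => (T.nth j).aVal.toNat) (fun j => (T.nth j).isLeaf) T.size i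

/-- `c(i)`: the number of nodes of `T` whose certificate is node `i`. -/
def certCount (T : LTree) (i : ℕ) : ℕ :=
  ((List.range (T.size + 1)).filter (fun j => cert T j == i)).length

/-- The lower path of `I_T`: concatenation of `u d^{c(v)}` over nodes in preorder. -/
def Ppath (T : LTree) : List Bool :=
  ((List.range (T.size + 1)).map (fun i => true :: List.replicate (certCount T i) false)).flatten

/-! ### Statistics on degree trees -/

/-- Number of leaf nodes. -/
def lnode (T : LTree) : ℕ := (T.preSub.filter (fun t => t.isLeaf)).length

/-- Number of zero nodes: internal nodes whose leftmost descending edge is labeled `0`. -/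
def znode (T : LTree) : ℕ :=
  (T.preSub.filter (fun t => !t.isLeaf && decide (t.aVal = 0))).length

/-- Number of positive nodes: internal nodes whose leftmost descending edge has positive label. -/
def pnode (T : LTree) : ℕ :=
  (T.preSub.filter (fun t => !t.isLeaf && decide (0 < t.aVal))).length

/-! ### Unlabeled shapes (for fixing `T` while varying `ℓ`) -/

/-- An unlabeled plane tree. -/
inductive PShape : Type where
  | node : List PShape → PShape

mutual
/-- The underlying unlabeled plane tree of a labeled tree. -/
def LTree.shape : LTree → PShape
  | .node _ ts => .node (LTree.shapeList ts)
def LTree.shapeList : List LTree → List PShape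
  | [] => []
  | t :: ts => t.shape :: LTree.shapeList ts
end

/-- The defining relations of `T_I`: `(T, ℓ) = T_I([P,Q])` for a new interval
`[P,Q]` of size `n+1`, i.e. `T` corresponds to `Q'` (where `Q = uQ'd`) under the
classical bijection, and the leftmost descending edge of the `i`-th preorder node
is labeled by the number of rising contacts of the factor of `P` strictly between
the `(i+1)`-st up step and its matching down step. -/
def TIrel (n : ℕ) (P Q : List Bool) (T : LTree) : Prop :=
  IsDegreeTree T ∧ T.size = n ∧ Q = Qpath T ∧
    ∀ i ≤ n, (T.nth i).children ≠ [] →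
      (T.nth i).aVal = (risingContacts (Pslice P (i + 1)) : ℤ)

/-!
Nodes are indexed by their preorder rank, so the subtree of a node `u` is a contiguous block
of indices. Invariant, by induction on `u`: once all nodes of its block have been processed, the
red nodes they produced lie in the block, and exactly `ℓ(u) + 1` nodes of the block are still
black. Indeed `u` itself stays black, the blocks of its children keep `∑ (ℓ(vᵢ) + 1)` black nodes,
and `u` reddens `a` of them, which gives `1 + k + ∑ ℓ(vᵢ) - a = ℓ(u) + 1`.

When `v` is processed, the block of its leftmost child `v₁` therefore holds `ℓ(v₁) + 1 > a` black
nodes, so the `(a + 1)`-st black node after `v` lies in `T_*`: the certificate, the node just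
before it, is `v` when `a = 0` and otherwise a node of `T_*` other than its last one.
-/

open Finset

section Black

variable (S : Finset ℕ)

theorem lt_nextBlack (i : ℕ) : i < nextBlack S i :=
  (Nat.find_spec (p := fun j => i < j ∧ j ∉ S) _).1

theorem nextBlack_notMem (i : ℕ) : nextBlack S i ∉ S :=
  (Nat.find_spec (p := fun j => i < j ∧ j ∉ S) _).2

theorem mem_of_lt_nextBlack {i j : ℕ} (h₁ : i < j) (h₂ : j < nextBlack S i) : j ∈ S := by
  by_contra hj
  exact Nat.find_min (p := fun j => i < j ∧ j ∉ S) _ h₂ ⟨h₁, hj⟩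

theorem nextBlack_eq_succ {i : ℕ} (h : i + 1 ∉ S) : nextBlack S i = i + 1 :=
  le_antisymm (Nat.find_min' _ ⟨i.lt_succ_self, h⟩) (lt_nextBlack S i)

theorem kthBlack_strictMono (i : ℕ) : StrictMono (kthBlack S i) :=
  strictMono_nat_of_lt_succ fun _ => lt_nextBlack S _

theorem add_le_kthBlack (i m : ℕ) : i + m ≤ kthBlack S i m := by
  induction m with
  | zero => exact le_rfl
  | succ m ih => exact ih.trans_lt (lt_nextBlack S _)

theorem kthBlack_succ_notMem (i m : ℕ) : kthBlack S i (m + 1) ∉ S :=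
  nextBlack_notMem S _

theorem card_Ico_kthBlack_sdiff (i m : ℕ) : #(Ico (i + 1) (kthBlack S i m + 1) \ S) = m := by
  induction m with
  | zero => simp [kthBlack]
  | succ m ih =>
    have hlt := kthBlack_strictMono S i (Nat.lt_add_one m)
    have hgap : Ico (kthBlack S i m + 1) (kthBlack S i (m + 1) + 1) \ S =
        {kthBlack S i (m + 1)} := by
      ext x
      simp only [mem_sdiff, mem_Ico, mem_singleton]
      constructor
      · rintro ⟨⟨h₁, h₂⟩, hx⟩
        by_contra hne
        exact hx (mem_of_lt_nextBlack S h₁ (lt_of_le_of_ne (Nat.lt_succ_iff.1 h₂) hne))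
      · rintro rfl
        exact ⟨⟨hlt, by omega⟩, kthBlack_succ_notMem S i m⟩
    have hi := add_le_kthBlack S i m
    rw [← Ico_union_Ico_eq_Ico (b := kthBlack S i m + 1) (by omega) (by omega),
      union_sdiff_distrib, card_union_of_disjoint
        ((Ico_disjoint_Ico_consecutive _ _ _).mono sdiff_subset sdiff_subset),
      ih, hgap, card_singleton]

theorem kthBlack_lt_of_le_card {i m b : ℕ} (hm : 0 < m) (h : m ≤ #(Ico (i + 1) b \ S)) :
    kthBlack S i m < b := by
  by_contra! hb
  have hmem : kthBlack S i m ∈ Ico (i + 1) (kthBlack S i m + 1) \ S := by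
    obtain ⟨m, rfl⟩ : ∃ m', m = m' + 1 := ⟨m - 1, by omega⟩
    have := add_le_kthBlack S i (m + 1)
    exact mem_sdiff.2 ⟨mem_Ico.2 ⟨by omega, by omega⟩, kthBlack_succ_notMem S i m⟩
  have hsub : Ico (i + 1) b \ S ⊆ (Ico (i + 1) (kthBlack S i m + 1) \ S).erase (kthBlack S i m) := by
    intro x hx
    simp only [mem_sdiff, mem_Ico, mem_erase] at hx ⊢
    exact ⟨by omega, ⟨hx.1.1, by omega⟩, hx.2⟩
  have := card_le_card hsub
  rw [card_erase_of_mem hmem, card_Ico_kthBlack_sdiff] at this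
  omega

end Black

-- The red nodes once the nodes `n, n - 1, …, j` have been processed.
def redAfter (r : ℕ → ℕ) (lf : ℕ → Bool) (n j : ℕ) : Finset ℕ := redGo r lf n (n + 1 - j)

section Coloring

variable {r : ℕ → ℕ} {lf : ℕ → Bool} {n : ℕ}

theorem redGo_monotone : Monotone (redGo r lf n) :=
  monotone_nat_of_le_succ fun k => by
    simp only [redGo]
    split_ifs
    exacts [subset_rfl, subset_union_left]

theorem redAfter_antitone : Antitone (redAfter r lf n) :=
  fun _ _ h => redGo_monotone (by omega)

theorem le_of_mem_redGo {k x : ℕ} (hx : x ∈ redGo r lf n k) : n + 2 ≤ x + k := by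
  induction k with
  | zero => simp [redGo] at hx
  | succ k ih =>
    simp only [redGo] at hx
    split_ifs at hx
    · have := ih hx; omega
    · rcases mem_union.1 hx with h | h
      · have := ih h; omega
      · obtain ⟨m, hm, rfl⟩ := mem_image.1 h
        have := add_le_kthBlack (redGo r lf n k) (n - k) m
        rw [mem_Icc] at hm
        omega

theorem lt_of_mem_redAfter {j x : ℕ} (hx : x ∈ redAfter r lf n j) : j < x := by
  by_cases hj : j ≤ n + 1
  · have := le_of_mem_redGo hx
    omega
  · rw [redAfter, show n + 1 - j = 0 by omega] at hx
    simp [redGo] at hx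

theorem redAfter_of_le {j : ℕ} (hj : j ≤ n) :
    redAfter r lf n j = if lf j then redAfter r lf n (j + 1)
      else redAfter r lf n (j + 1) ∪ (Icc 1 (r j)).image (kthBlack (redAfter r lf n (j + 1)) j) := by
  rw [redAfter, show n + 1 - j = n - j + 1 by omega, redGo, show n - (n - j) = j by omega]
  simp only [redAfter, Nat.add_sub_add_right]

theorem certAux_of_isLeaf {i : ℕ} (h : lf i = true) : certAux r lf n i = i := by
  simp [certAux, h]

theorem certAux_of_not_isLeaf {i : ℕ} (h : lf i = false) :
    certAux r lf n i = kthBlack (redAfter r lf n (i + 1)) i (r i + 1) - 1 := by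
  simp [certAux, h, redAfter]

theorem certAux_eq_or_lt {i b : ℕ} (hlf : lf i = false)
    (hr : r i < #(Ico (i + 1) b \ redAfter r lf n (i + 1))) :
    certAux r lf n i = i ∨ (i < certAux r lf n i ∧ certAux r lf n i + 1 < b) := by
  rw [certAux_of_not_isLeaf hlf]
  set S := redAfter r lf n (i + 1)
  have hlt := kthBlack_lt_of_le_card S (by omega : 0 < r i + 1) hr
  rcases Nat.eq_zero_or_pos (r i) with h0 | hpos
  · left
    rw [h0, zero_add, kthBlack, kthBlack,
      nextBlack_eq_succ S fun h => lt_irrefl _ (lt_of_mem_redAfter h)]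
    rfl
  · right
    have := add_le_kthBlack S i (r i + 1)
    omega

variable (r lf n) in
def RedInvariant (j k : ℕ) (c : ℤ) : Prop :=
  redAfter r lf n j ⊆ redAfter r lf n (j + k) ∪ Ico j (j + k) ∧
    (#(Ico j (j + k) \ redAfter r lf n j) : ℤ) = c

theorem redInvariant_zero (j : ℕ) : RedInvariant r lf n j 0 0 := by
  simp [RedInvariant]

theorem redInvariant_leaf {j : ℕ} (hj : j ≤ n) (hlf : lf j = true) : RedInvariant r lf n j 1 1 := by
  have hred : redAfter r lf n j = redAfter r lf n (j + 1) := by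
    rw [redAfter_of_le hj, if_pos hlf]
  refine ⟨hred ▸ subset_union_left, ?_⟩
  rw [Nat.Ico_succ_singleton, sdiff_eq_self_of_disjoint
    (disjoint_singleton_left.2 fun h => lt_irrefl _ (lt_of_mem_redAfter h))]
  simp

theorem RedInvariant.append {j k₁ k₂ : ℕ} {c₁ c₂ : ℤ} (h₁ : RedInvariant r lf n j k₁ c₁)
    (h₂ : RedInvariant r lf n (j + k₁) k₂ c₂) : RedInvariant r lf n j (k₁ + k₂) (c₁ + c₂) := by
  obtain ⟨hsub₁, hcard₁⟩ := h₁
  obtain ⟨hsub₂, hcard₂⟩ := h₂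
  have hsplit : Ico j (j + k₁) ∪ Ico (j + k₁) (j + k₁ + k₂) = Ico j (j + (k₁ + k₂)) := by
    rw [← add_assoc]
    exact Ico_union_Ico_eq_Ico (by omega) (by omega)
  have hsame : Ico (j + k₁) (j + k₁ + k₂) \ redAfter r lf n j =
      Ico (j + k₁) (j + k₁ + k₂) \ redAfter r lf n (j + k₁) := by
    ext x
    simp only [mem_sdiff]
    refine and_congr_right fun hx => not_congr
      ⟨fun h => ?_, fun h => redAfter_antitone (Nat.le_add_right j k₁) h⟩
    rcases mem_union.1 (hsub₁ h) with h' | h'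
    · exact h'
    · exact absurd (mem_Ico.1 h').2 (not_lt.2 (mem_Ico.1 hx).1)
  constructor
  · calc redAfter r lf n j
        ⊆ (redAfter r lf n (j + k₁ + k₂) ∪ Ico (j + k₁) (j + k₁ + k₂)) ∪ Ico j (j + k₁) :=
          hsub₁.trans (union_subset_union hsub₂ subset_rfl)
      _ = redAfter r lf n (j + (k₁ + k₂)) ∪ Ico j (j + (k₁ + k₂)) := by
          rw [← hsplit, ← add_assoc, union_assoc, union_comm (Ico (j + k₁) _)]
  · rw [← hsplit, union_sdiff_distrib, card_union_of_disjoint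
      ((Ico_disjoint_Ico_consecutive _ _ _).mono sdiff_subset sdiff_subset), hsame]
    push_cast
    rw [hcard₁, hcard₂]

-- `[j + 1, b)` is the block of the first child of `j`; it contains the `r j` nodes reddened at `j`.
theorem RedInvariant.node {j k b : ℕ} {c : ℤ} (hj : j ≤ n) (hlf : lf j = false)
    (hb : b ≤ j + 1 + k) (hr : r j < #(Ico (j + 1) b \ redAfter r lf n (j + 1)))
    (h : RedInvariant r lf n (j + 1) k c) : RedInvariant r lf n j (k + 1) (c + 1 - r j) := by
  set S := redAfter r lf n (j + 1)
  set N := (Icc 1 (r j)).image (kthBlack S j)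
  have hred : redAfter r lf n j = S ∪ N := by
    rw [redAfter_of_le hj, if_neg (by simp [hlf])]
  have hN : N ⊆ Ico (j + 1) (j + 1 + k) \ S := by
    intro x hx
    obtain ⟨m, hm, rfl⟩ := mem_image.1 hx
    rw [mem_Icc] at hm
    obtain ⟨m, rfl⟩ : ∃ m', m = m' + 1 := ⟨m - 1, by omega⟩
    have hlt := kthBlack_lt_of_le_card S (by omega : 0 < m + 1) (hm.2.trans hr.le)
    have hge := add_le_kthBlack S j (m + 1)
    exact mem_sdiff.2 ⟨mem_Ico.2 ⟨by omega, by omega⟩, kthBlack_succ_notMem S j m⟩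
  have hcardN : #N = r j := by
    rw [card_image_of_injective _ (kthBlack_strictMono S j).injective, Nat.card_Icc]
    omega
  have hjS : j ∉ S := fun h => by have := lt_of_mem_redAfter h; omega
  have hblock : Ico j (j + (k + 1)) \ S = insert j (Ico (j + 1) (j + 1 + k) \ S) := by
    rw [← insert_sdiff_of_notMem _ hjS, insert_Ico_add_one_left_eq_Ico (by omega),
      show j + 1 + k = j + (k + 1) by omega]
  constructor
  · rw [hred, show j + (k + 1) = j + 1 + k by omega]
    have hIco : Ico (j + 1) (j + 1 + k) ⊆ Ico j (j + 1 + k) := Ico_subset_Ico (by omega) le_rfl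
    exact union_subset (h.1.trans (union_subset_union subset_rfl hIco))
      ((hN.trans sdiff_subset).trans (hIco.trans subset_union_right))
  · have hsub : N ⊆ Ico j (j + (k + 1)) \ S := hblock ▸ hN.trans (subset_insert _ _)
    have hdiff : Ico j (j + (k + 1)) \ (S ∪ N) = (Ico j (j + (k + 1)) \ S) \ N :=
      sdiff_sdiff_left.symm
    rw [hred, hdiff, card_sdiff_of_subset hsub, Nat.cast_sub (card_le_card hsub),
      hblock, card_insert_of_notMem (by simp), hcardN]
    push_cast
    rw [h.2]

end Coloring

mutual
theorem LTree.preSub_length (t : LTree) : t.preSub.length = t.size + 1 := by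
  cases t with
  | node l ts =>
    simp only [LTree.preSub, List.length_cons, LTree.size, LTree.preSubList_length]
theorem LTree.preSubList_length (ts : List LTree) :
    (LTree.preSubList ts).length = LTree.sizeList ts := by
  cases ts with
  | nil => rfl
  | cons u us =>
    simp only [LTree.preSubList, List.length_append, LTree.sizeList, LTree.preSub_length,
      LTree.preSubList_length]
    omega
end

theorem LTree.preSub_eq (t : LTree) : t.preSub = t :: LTree.preSubList t.children := by
  cases t; rfl

theorem LTree.preSubList_eq_flatMap (ts : List LTree) :
    LTree.preSubList ts = ts.flatMap LTree.preSub := by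
  induction ts with
  | nil => rfl
  | cons t ts ih => simp [LTree.preSubList, ih]

mutual
theorem LTree.preSub_getD_isPrefix (t : LTree) (j : ℕ) (hj : j ≤ t.size) :
    (t.preSub.getD j default).preSub <+: t.preSub.drop j := by
  cases t with
  | node l ts =>
    cases j with
    | zero => simp [LTree.preSub]
    | succ j =>
      simp only [LTree.preSub, List.drop_succ_cons, List.getD_cons_succ]
      exact LTree.preSubList_getD_isPrefix ts j (by rw [LTree.preSubList_length]; exact hj)
theorem LTree.preSubList_getD_isPrefix (ts : List LTree) (j : ℕ)
    (hj : j < (LTree.preSubList ts).length) :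
    ((LTree.preSubList ts).getD j default).preSub <+: (LTree.preSubList ts).drop j := by
  cases ts with
  | nil => simp [LTree.preSubList] at hj
  | cons u us =>
    simp only [LTree.preSubList, List.length_append] at hj ⊢
    by_cases hju : j < u.preSub.length
    · rw [List.drop_append_of_le_length hju.le, List.getD_append _ _ _ _ hju]
      exact (LTree.preSub_getD_isPrefix u j (by rw [LTree.preSub_length] at hju; omega)).trans
        (List.prefix_append _ _)
    · rw [not_lt] at hju
      rw [List.drop_append, List.drop_eq_nil_of_le hju, List.nil_append,
        List.getD_append_right _ _ _ _ hju]
      exact LTree.preSubList_getD_isPrefix us _ (by omega)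
end

theorem LTree.add_size_nth_le (T : LTree) {i : ℕ} (hi : i ≤ T.size) :
    i + (T.nth i).size ≤ T.size := by
  have := (T.preSub_getD_isPrefix i hi).length_le
  rw [List.length_drop, LTree.preSub_length, LTree.preSub_length] at this
  exact (by unfold LTree.nth; omega)

theorem LTree.nth_add (T : LTree) {i m : ℕ} (hi : i ≤ T.size) (hm : m ≤ (T.nth i).size) :
    T.nth (i + m) = (T.nth i).preSub.getD m default := by
  have hpre := T.preSub_getD_isPrefix i hi
  have hext := T.add_size_nth_le hi
  have hm' : m < (T.nth i).preSub.length := by rw [LTree.preSub_length]; omega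
  have hlen : i + m < T.preSub.length := by rw [LTree.preSub_length]; omega
  rw [List.getD_eq_getElem _ _ hm', LTree.nth, List.getD_eq_getElem _ _ hlen]
  exact (List.getElem_drop (h := by rw [List.length_drop]; omega)).symm.trans
    (hpre.getElem hm').symm

theorem LTree.nth_succ_of_nth_eq (T : LTree) {i : ℕ} {l : ℤ} {t₁ : LTree} {ts : List LTree}
    (hi : i ≤ T.size) (h : T.nth i = .node l (t₁ :: ts)) : T.nth (i + 1) = t₁ := by
  have hsize : 1 ≤ (T.nth i).size := by
    rw [h]
    simp only [LTree.size, LTree.sizeList]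
    omega
  rw [T.nth_add hi hsize, h]
  simp only [LTree.preSub, LTree.preSubList, List.getD_cons_succ]
  rw [t₁.preSub_eq]
  rfl

theorem LTree.aVal_node_of_label_eq {l a : ℤ} {t₁ : LTree} {ts : List LTree}
    (hl : l = ((1 + ts.length : ℕ) : ℤ) - a + (t₁.label + (ts.map LTree.label).sum)) :
    (LTree.node l (t₁ :: ts)).aVal = a := by
  simp only [LTree.aVal, List.length_cons, List.map_cons, List.sum_cons]
  push_cast at hl ⊢
  omega

theorem IsDegreeTree.of_mem_preSub {T u : LTree} (hT : IsDegreeTree T) (hu : u ∈ T.preSub) :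
    IsDegreeTree u := by
  induction hT with
  | leaf =>
    simp only [LTree.preSub, LTree.preSubList, List.mem_singleton] at hu
    exact hu ▸ .leaf
  | internal l a t₁ ts h₁ h ha₀ ha₁ hl ih₁ ih =>
    simp only [LTree.preSub, LTree.preSubList_eq_flatMap, List.mem_cons, List.mem_flatMap] at hu
    obtain rfl | ⟨t, ht, hut⟩ := hu
    · exact .internal l a t₁ ts h₁ h ha₀ ha₁ hl
    obtain rfl | ht := ht
    exacts [ih₁ hut, ih t ht hut]

theorem IsDegreeTree.nth {T : LTree} (hT : IsDegreeTree T) {i : ℕ} (hi : i ≤ T.size) :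
    IsDegreeTree (T.nth i) := by
  have hlen : i < T.preSub.length := by rw [LTree.preSub_length]; omega
  exact hT.of_mem_preSub (by rw [LTree.nth, List.getD_eq_getElem _ _ hlen]; exact List.getElem_mem hlen)

def MatchesAt (r : ℕ → ℕ) (lf : ℕ → Bool) (j : ℕ) (l : List LTree) : Prop :=
  ∀ m (hm : m < l.length), lf (j + m) = l[m].isLeaf ∧ r (j + m) = l[m].aVal.toNat

section Invariant

variable {r : ℕ → ℕ} {lf : ℕ → Bool} {n : ℕ}

theorem matchesAt_cons {j : ℕ} {t : LTree} {l : List LTree} :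
    MatchesAt r lf j (t :: l) ↔
      (lf j = t.isLeaf ∧ r j = t.aVal.toNat) ∧ MatchesAt r lf (j + 1) l := by
  refine ⟨fun h => ⟨h 0 (by simp), fun m hm => ?_⟩, fun ⟨h₀, h⟩ m hm => ?_⟩
  · rw [show j + 1 + m = j + (m + 1) by omega]
    exact h (m + 1) (by simpa using hm)
  · cases m with
    | zero => simpa using h₀
    | succ m =>
      rw [show j + (m + 1) = j + 1 + m by omega]
      exact h m (by simpa using hm)

theorem matchesAt_append {j : ℕ} {l₁ l₂ : List LTree} :
    MatchesAt r lf j (l₁ ++ l₂) ↔ MatchesAt r lf j l₁ ∧ MatchesAt r lf (j + l₁.length) l₂ := by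
  induction l₁ generalizing j with
  | nil => simp [MatchesAt]
  | cons t l₁ ih =>
    simp only [List.cons_append, matchesAt_cons, ih, List.length_cons, and_assoc,
      Nat.add_right_comm j 1, Nat.add_assoc]

theorem matchesAt_nth (T : LTree) {i : ℕ} (hi : i ≤ T.size) :
    MatchesAt (fun k => (T.nth k).aVal.toNat) (fun k => (T.nth k).isLeaf) i (T.nth i).preSub := by
  intro m hm
  have hm' : m ≤ (T.nth i).size := by rw [LTree.preSub_length] at hm; omega
  simp only [T.nth_add hi hm', List.getD_eq_getElem _ _ hm, and_self]

theorem redInvariant_forest (ts : List LTree)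
    (hts : ∀ u ∈ ts, ∀ {j : ℕ}, j + u.size ≤ n → MatchesAt r lf j u.preSub →
      RedInvariant r lf n j (u.size + 1) (u.label + 1))
    {j : ℕ} (hj : j + LTree.sizeList ts ≤ n + 1) (hm : MatchesAt r lf j (LTree.preSubList ts)) :
    RedInvariant r lf n j (LTree.sizeList ts) (ts.length + (ts.map LTree.label).sum) := by
  induction ts generalizing j with
  | nil => simpa [LTree.sizeList] using redInvariant_zero j
  | cons u us ih =>
    rw [List.forall_mem_cons] at hts
    have hsize : LTree.sizeList (u :: us) = (u.size + 1) + LTree.sizeList us := by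
      simp only [LTree.sizeList]
      omega
    rw [LTree.preSubList, matchesAt_append, LTree.preSub_length] at hm
    rw [hsize] at hj ⊢
    convert (hts.1 (by omega) hm.1).append (ih hts.2 (by omega) hm.2) using 1
    simp only [List.length_cons, List.map_cons, List.sum_cons]
    push_cast
    ring

theorem IsDegreeTree.redInvariant {t : LTree} (ht : IsDegreeTree t) {j : ℕ}
    (hj : j + t.size ≤ n) (hm : MatchesAt r lf j t.preSub) :
    RedInvariant r lf n j (t.size + 1) (t.label + 1) := by
  induction ht generalizing j with
  | leaf =>
    simp only [LTree.preSub, LTree.preSubList, matchesAt_cons] at hm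
    exact redInvariant_leaf hj hm.1.1
  | internal l a t₁ ts h₁ hts ha₀ ha₁ hl ih₁ ih =>
    have hsize : (LTree.node l (t₁ :: ts)).size = LTree.sizeList (t₁ :: ts) := rfl
    have hsize₁ : LTree.sizeList (t₁ :: ts) = 1 + t₁.size + LTree.sizeList ts := rfl
    simp only [LTree.preSub, matchesAt_cons] at hm
    obtain ⟨⟨hlf, hr⟩, hm⟩ := hm
    rw [LTree.aVal_node_of_label_eq hl] at hr
    have hm₁ : MatchesAt r lf (j + 1) t₁.preSub := by
      rw [LTree.preSubList, matchesAt_append] at hm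
      exact hm.1
    have hforest := redInvariant_forest (t₁ :: ts) (List.forall_mem_cons.2 ⟨ih₁, ih⟩)
      (by omega) hm
    have hfirst := ih₁ (j := j + 1) (by omega) hm₁
    rw [hsize]
    convert hforest.node (b := j + 1 + (t₁.size + 1)) (by omega) (by simpa [LTree.isLeaf, LTree.children] using hlf)
      (by omega) (by zify; rw [hfirst.2, hr, Int.toNat_of_nonneg ha₀]; omega) using 1
    rw [hr, Int.toNat_of_nonneg ha₀, hl, LTree.label]
    simp only [List.length_cons, List.map_cons, List.sum_cons]
    push_cast
    ring

end Invariant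

theorem stmt5 (T : LTree) (hT : IsDegreeTree T) (i : ℕ) (hi : i ≤ T.size) :
    cert T i = i ∨
      ((T.nth i).children ≠ [] ∧ i + 1 ≤ cert T i ∧
        cert T i < i + 1 + (T.nth (i + 1)).size) := by
  unfold cert
  have hdeg := hT.nth hi
  have hext := T.add_size_nth_le hi
  rcases hnode : T.nth i with ⟨l, _ | ⟨t₁, ts⟩⟩
  · exact .inl (certAux_of_isLeaf (by simp [hnode, LTree.isLeaf, LTree.children]))
  rw [hnode] at hdeg hext
  obtain _ | ⟨_, a, _, _, -, -, ha₀, ha₁, hl⟩ := hdeg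
  have hsucc := T.nth_succ_of_nth_eq hi hnode
  have hi₁ : i + 1 ≤ T.size := by
    simp only [LTree.size, LTree.sizeList] at hext
    omega
  have hfirst := (hT.nth hi₁).redInvariant (T.add_size_nth_le hi₁) (matchesAt_nth T hi₁)
  have hr : ((T.nth i).aVal.toNat : ℤ) = a := by
    rw [hnode, LTree.aVal_node_of_label_eq hl, Int.toNat_of_nonneg ha₀]
  refine (certAux_eq_or_lt (b := i + 1 + ((T.nth (i + 1)).size + 1))
    (by simp [hnode, LTree.isLeaf, LTree.children]) ?_).imp_right
    fun h => ⟨by simp [LTree.children], h.1, by omega⟩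
  zify
  rw [hfirst.2, hr, hsucc]
  omega
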